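/- Each of the real-valued pinwheel instances (3/2, 5, 9), (11/7, 4, 11), (12/7, 3, 12), (2, 3, 6), and (2, 12/5, 12) is not schedulable; that is, for each of these instances no schedule is valid. -/
import Mathlib


/-- A schedule `S : ℤ → Fin k` is valid for the real-valued pinwheel instance
`a : Fin k → ℝ` if for every task `i`, every positive integer `l`, and every
integer `m`, task `i` is performed at least `l` times on the days
`t ∈ [m, m + ⌈l * a i⌉)`. -/
def PinValid {k : ℕ} (a : Fin k → ℝ) (S : ℤ → Fin k) : Prop :=
  ∀ i : Fin k, ∀ l : ℕ, 0 < l → ∀ m : ℤ,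
    (l : ℕ) ≤ ((Finset.Ico m (m + ⌈(l : ℝ) * a i⌉)).filter (fun t => S t = i)).card

/-- A real-valued pinwheel instance is schedulable if some schedule is valid for it. -/
def PinSchedulable {k : ℕ} (a : Fin k → ℝ) : Prop := ∃ S : ℤ → Fin k, PinValid a S

/-- Key combinatorial lemma: if every window of length `B` contains a `1`,
every window of length `B+1` contains at most two non-`0` days, and `2`
occurs somewhere, we get a contradiction. -/
lemma pin_key (S : ℤ → Fin 3) (B : ℤ)
    (h1 : ∀ m : ℤ, ∃ u, m ≤ u ∧ u < m + B ∧ S u = 1)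
    (h0 : ∀ m : ℤ, ((Finset.Ico m (m + (B + 1))).filter (fun t => S t ≠ 0)).card ≤ 2)
    (h2 : ∃ t, S t = 2) : False := by
  obtain ⟨t, ht⟩ := h2
  obtain ⟨u, hu1, hu2, hu3⟩ := h1 (t - B)
  obtain ⟨w, hw1, hw2, hw3⟩ := h1 (u + 1)
  have hut : u ≠ t := fun h => by rw [h, ht] at hu3; exact absurd hu3 (by decide)
  have hwt : w ≠ t := fun h => by rw [h, ht] at hw3; exact absurd hw3 (by decide)
  have huw : u ≠ w := by omega
  have hsub : ({u, t, w} : Finset ℤ) ⊆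
      (Finset.Ico u (u + (B + 1))).filter (fun s => S s ≠ 0) := by
    intro x hx
    simp only [Finset.mem_insert, Finset.mem_singleton] at hx
    simp only [Finset.mem_filter, Finset.mem_Ico]
    rcases hx with rfl | rfl | rfl
    · exact ⟨⟨by omega, by omega⟩, by rw [hu3]; decide⟩
    · exact ⟨⟨by omega, by omega⟩, by rw [ht]; decide⟩
    · exact ⟨⟨by omega, by omega⟩, by rw [hw3]; decide⟩
  have hcard : ({u, t, w} : Finset ℤ).card = 3 := by
    rw [Finset.card_insert_of_notMem (by simp [hut, huw]),
      Finset.card_insert_of_notMem (Finset.notMem_singleton.mpr fun h => hwt h.symm),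
      Finset.card_singleton]
  have := (Finset.card_le_card hsub).trans (h0 u)
  omega

/-- Uniform non-schedulability lemma covering all five instances. -/
lemma pin_main (B : ℕ) (hB : 2 ≤ B) (a : Fin 3 → ℝ)
    (e0 : ⌈((B : ℝ) - 1) * a 0⌉ = (B : ℤ) + 1)
    (e1 : ⌈(1 : ℝ) * a 1⌉ = (B : ℤ)) :
    ¬ PinSchedulable a := by
  rintro ⟨S, hv⟩
  have hcast : (((B - 1 : ℕ)) : ℝ) = (B : ℝ) - 1 := by
    push_cast [Nat.cast_sub (by omega : 1 ≤ B)]; ring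
  refine pin_key S (B : ℤ) ?_ ?_ ?_
  · intro m
    have h := hv 1 1 one_pos m
    rw [Nat.cast_one, e1] at h
    have hne : ((Finset.Ico m (m + (B : ℤ))).filter (fun t => S t = 1)).Nonempty :=
      Finset.card_pos.mp (by omega)
    obtain ⟨u, hu⟩ := hne
    simp only [Finset.mem_filter, Finset.mem_Ico] at hu
    exact ⟨u, hu.1.1, hu.1.2, hu.2⟩
  · intro m
    have h := hv 0 (B - 1) (by omega) m
    rw [hcast, e0] at h
    have hsplit := Finset.card_filter_add_card_filter_not
      (s := Finset.Ico m (m + ((B : ℤ) + 1))) (p := fun t => S t = 0)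
    have hIco : (Finset.Ico m (m + ((B : ℤ) + 1))).card = ((B : ℤ) + 1).toNat := by
      rw [Int.card_Ico]; congr 1; omega
    simp only [ne_eq]
    omega
  · have h := hv 2 1 one_pos 0
    have hne : ((Finset.Ico (0 : ℤ) (0 + ⌈((1 : ℕ) : ℝ) * a 2⌉)).filter
        (fun t => S t = 2)).Nonempty := Finset.card_pos.mp (by omega)
    obtain ⟨t, ht⟩ := hne
    exact ⟨t, (Finset.mem_filter.mp ht).2⟩

theorem five_instances_not_schedulable :
    ¬ PinSchedulable ![(3 : ℝ) / 2, 5, 9] ∧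
    ¬ PinSchedulable ![(11 : ℝ) / 7, 4, 11] ∧
    ¬ PinSchedulable ![(12 : ℝ) / 7, 3, 12] ∧
    ¬ PinSchedulable ![(2 : ℝ), 3, 6] ∧
    ¬ PinSchedulable ![(2 : ℝ), 12 / 5, 12] := by
  refine ⟨pin_main 5 (by norm_num) _ ?_ ?_, pin_main 4 (by norm_num) _ ?_ ?_,
    pin_main 3 (by norm_num) _ ?_ ?_, pin_main 3 (by norm_num) _ ?_ ?_,
    pin_main 3 (by norm_num) _ ?_ ?_⟩ <;>
  · simp only [Matrix.cons_val_zero, Matrix.cons_val_one, Matrix.head_cons]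
    rw [Int.ceil_eq_iff]
    constructor <;> norm_num
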